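/- (Quotient of the Golden order by (1+i)) Let θ = (1+√5)/2 and θ̄ = (1−√5)/2 viewed in ℂ, and let S be a subring of the 2×2 complex matrices whose carrier is the set Λ of matrices [[p+qθ, i·(r+sθ̄)], [r+sθ, p+qθ̄]] with p,q,r,s ∈ ℤ[i]. Then there exists a surjective ring homomorphism f from S onto the ring M_2(F_2) of 2×2 matrices over the field with two elements, whose kernel is exactly the set of elements of S of the form (1+i)·B (entrywise scalar multiple) with B ∈ Λ. Consequently Λ/(1+i)Λ ≅ M_2(F_2). -/

import Mathlib

/-!
Modulo `1 + i`, the Gaussian integers become `𝔽₂` (with `i ↦ 1`), `𝒪_L = ℤ[i][θ]` becomes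
`𝔽₄ = 𝔽₂[θ]/(θ² + θ + 1)`, and `e² = i` becomes `e² = 1`. So `Λ/(1+i)Λ` is the cyclic algebra
`(𝔽₄/𝔽₂, Frobenius, 1)`, which is split: `θ ↦ W = !![0, 1; 1, 1]`, `e ↦ E = !![1, 1; 0, 1]` is an
isomorphism onto `M₂(𝔽₂)`. Concretely, every element of `Λ` has unique coordinates
`(p, q, r, s) ∈ ℤ[i]⁴` because `θ` is irrational; reducing them modulo `1 + i` and applying the
splitting is multiplicative because the coordinate formula for products reduces to the relations
of `W` and `E`, and its kernel consists of the elements whose coordinates are all divisible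
by `1 + i`.
-/

open Matrix

/-- `θ = (1+√5)/2` viewed in `ℂ`. -/
noncomputable def goldenTheta : ℂ := (((1 + Real.sqrt 5) / 2 : ℝ) : ℂ)

/-- `θ̄ = (1-√5)/2` viewed in `ℂ`. -/
noncomputable def goldenThetaBar : ℂ := (((1 - Real.sqrt 5) / 2 : ℝ) : ℂ)

/-- The set `Λ` of matrices `[[p+qθ, i(r+sθ̄)],[r+sθ, p+qθ̄]]` with `p,q,r,s ∈ ℤ[i]`. -/
def goldenOrder : Set (Matrix (Fin 2) (Fin 2) ℂ) :=
  {M | ∃ p q r s : GaussianInt,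
    M = !![GaussianInt.toComplex p + GaussianInt.toComplex q * goldenTheta,
           Complex.I * (GaussianInt.toComplex r + GaussianInt.toComplex s * goldenThetaBar);
           GaussianInt.toComplex r + GaussianInt.toComplex s * goldenTheta,
           GaussianInt.toComplex p + GaussianInt.toComplex q * goldenThetaBar]}

open Real

local notation "ℤ[i]" => GaussianInt

lemma Irrational.eq_zero_of_intCast_add_intCast_mul_eq_zero {α : ℝ} (hα : Irrational α)
    {a b : ℤ} (h : (a : ℝ) + b * α = 0) : a = 0 ∧ b = 0 := by
  obtain rfl : b = 0 := by
    by_contra hb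
    exact ((hα.intCast_mul hb).intCast_add a).ne_zero h
  simpa using h

namespace GaussianInt

lemma eq_zero_of_add_mul_irrational_eq_zero {α : ℝ} (hα : Irrational α) {x y : ℤ[i]}
    (h : (x : ℂ) + y * α = 0) : x = 0 ∧ y = 0 := by
  have hre := congrArg Complex.re h
  have him := congrArg Complex.im h
  simp only [toComplex_def, Complex.add_re, Complex.add_im, Complex.mul_re,
    Complex.mul_im, Complex.ofReal_re, Complex.ofReal_im, Complex.I_re, Complex.I_im,
    Complex.intCast_re, Complex.intCast_im, Complex.zero_re, Complex.zero_im] at hre him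
  obtain ⟨hxre, hyre⟩ :=
    hα.eq_zero_of_intCast_add_intCast_mul_eq_zero (a := x.re) (b := y.re)
      (by linear_combination hre)
  obtain ⟨hxim, hyim⟩ :=
    hα.eq_zero_of_intCast_add_intCast_mul_eq_zero (a := x.im) (b := y.im)
      (by linear_combination him)
  exact ⟨Zsqrtd.ext hxre hxim, Zsqrtd.ext hyre hyim⟩

lemma add_mul_irrational_injective {α : ℝ} (hα : Irrational α) {x y x' y' : ℤ[i]}
    (h : (x : ℂ) + y * α = x' + y' * α) : x = x' ∧ y = y' := by
  obtain ⟨hx, hy⟩ := eq_zero_of_add_mul_irrational_eq_zero hα (x := x - x') (y := y - y')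
    (by rw [map_sub, map_sub]; linear_combination h)
  exact ⟨sub_eq_zero.mp hx, sub_eq_zero.mp hy⟩

lemma toComplex_sqrtd : toComplex Zsqrtd.sqrtd = Complex.I := by
  simp [toComplex_def]

def toZModTwo : ℤ[i] →+* ZMod 2 := Zsqrtd.lift ⟨1, by decide⟩

lemma toZModTwo_apply (x : ℤ[i]) : toZModTwo x = x.re + x.im := by
  simp [toZModTwo]

lemma toZModTwo_sqrtd : toZModTwo Zsqrtd.sqrtd = 1 := by decide

lemma toZModTwo_eq_zero_iff {x : ℤ[i]} : toZModTwo x = 0 ↔ 1 + Zsqrtd.sqrtd ∣ x := by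
  rw [toZModTwo_apply, ← Int.cast_add, ZMod.intCast_zmod_eq_zero_iff_dvd]
  constructor
  · rintro ⟨k, hk⟩
    exact ⟨⟨k, k - x.re⟩, by ext <;> simp; omega⟩
  · rintro ⟨y, rfl⟩
    exact ⟨y.re, by simp; ring⟩

end GaussianInt

open GaussianInt

lemma goldenTheta_eq_goldenRatio : goldenTheta = (goldenRatio : ℂ) := rfl

lemma goldenThetaBar_eq_one_sub : goldenThetaBar = 1 - goldenTheta := by
  unfold goldenTheta goldenThetaBar; push_cast; ring

lemma goldenTheta_sq : goldenTheta ^ 2 = goldenTheta + 1 := by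
  rw [goldenTheta_eq_goldenRatio]; exact_mod_cast goldenRatio_sq

/-- The element `p + qθ + e (r + sθ)` of `Λ`, with coordinates `(p, q, r, s)`. -/
noncomputable def goldenMatrix : ℤ[i] × ℤ[i] × ℤ[i] × ℤ[i] → Matrix (Fin 2) (Fin 2) ℂ
  | (p, q, r, s) => !![(p : ℂ) + q * goldenTheta, Complex.I * (r + s * goldenThetaBar);
      r + s * goldenTheta, p + q * goldenThetaBar]

lemma range_goldenMatrix : Set.range goldenMatrix = goldenOrder := by
  ext M
  constructor
  · rintro ⟨⟨p, q, r, s⟩, rfl⟩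
    exact ⟨p, q, r, s, rfl⟩
  · rintro ⟨p, q, r, s, rfl⟩
    exact ⟨(p, q, r, s), rfl⟩

lemma goldenMatrix_injective : Function.Injective goldenMatrix := by
  rintro ⟨p, q, r, s⟩ ⟨p', q', r', s'⟩ h
  have h00 := congrFun (congrFun h 0) 0
  have h10 := congrFun (congrFun h 1) 0
  simp only [goldenMatrix, of_apply, cons_val', cons_val_zero, cons_val_one, empty_val',
    cons_val_fin_one] at h00 h10
  obtain ⟨rfl, rfl⟩ := add_mul_irrational_injective goldenRatio_irrational h00
  obtain ⟨rfl, rfl⟩ := add_mul_irrational_injective goldenRatio_irrational h10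
  rfl

lemma goldenMatrix_add (v w : ℤ[i] × ℤ[i] × ℤ[i] × ℤ[i]) :
    goldenMatrix (v + w) = goldenMatrix v + goldenMatrix w := by
  obtain ⟨p, q, r, s⟩ := v
  obtain ⟨p', q', r', s'⟩ := w
  ext i j
  fin_cases i <;> fin_cases j <;> simp [goldenMatrix] <;> ring

lemma goldenMatrix_smul (c : ℤ[i]) (v : ℤ[i] × ℤ[i] × ℤ[i] × ℤ[i]) :
    goldenMatrix (c • v) = (c : ℂ) • goldenMatrix v := by
  obtain ⟨p, q, r, s⟩ := v
  ext i j
  fin_cases i <;> fin_cases j <;> simp [goldenMatrix] <;> ring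

lemma goldenMatrix_zero : goldenMatrix 0 = 0 := by
  simpa using goldenMatrix_smul 0 0

lemma goldenMatrix_one : goldenMatrix (1, 0, 0, 0) = 1 := by
  ext i j
  fin_cases i <;> fin_cases j <;> simp [goldenMatrix]

/-- Multiplication of `Λ` in the coordinates of `goldenMatrix`: it comes from
`(x₀ + e x₁)(y₀ + e y₁) = (x₀ y₀ + i σ(x₁) y₁) + e (x₁ y₀ + σ(x₀) y₁)` and `θ² = θ + 1`. -/
def goldenMul : ℤ[i] × ℤ[i] × ℤ[i] × ℤ[i] → ℤ[i] × ℤ[i] × ℤ[i] × ℤ[i] → ℤ[i] × ℤ[i] × ℤ[i] × ℤ[i]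
  | (p, q, r, s), (p', q', r', s') =>
    (p * p' + q * q' + Zsqrtd.sqrtd * (r * r' + s * r' - s * s'),
      p * q' + q * p' + q * q' + Zsqrtd.sqrtd * (r * s' - s * r'),
      r * p' + s * q' + p * r' + q * r' - q * s',
      r * q' + s * p' + s * q' + p * s' - q * r')

lemma goldenMatrix_mul (v w : ℤ[i] × ℤ[i] × ℤ[i] × ℤ[i]) :
    goldenMatrix v * goldenMatrix w = goldenMatrix (goldenMul v w) := by
  obtain ⟨p, q, r, s⟩ := v
  obtain ⟨p', q', r', s'⟩ := w
  have hθ := goldenTheta_sq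
  ext i j
  fin_cases i <;> fin_cases j <;>
    simp [goldenMatrix, goldenMul, mul_apply, Fin.sum_univ_two, goldenThetaBar_eq_one_sub,
      toComplex_sqrtd]
  · linear_combination ((q : ℂ) * q' - Complex.I * s * s') * hθ
  · linear_combination (Complex.I * (s * q' - q * s')) * hθ
  · linear_combination ((s : ℂ) * q' - q * s') * hθ
  · linear_combination ((q : ℂ) * q' - Complex.I * s * s') * hθ

/-- `a + bW + E(c + dW)` for `W = !![0, 1; 1, 1]` and `E = !![1, 1; 0, 1]`, which satisfy the
relations `W² = W + 1`, `E² = 1`, `EW = (1 + W)E` of `θ` and `e` modulo `1 + i`. -/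
def residueMatrix (a b c d : ZMod 2) : Matrix (Fin 2) (Fin 2) (ZMod 2) :=
  !![a + c + d, b + c; b + d, a + b + c + d]

lemma residueMatrix_mul (a b c d a' b' c' d' : ZMod 2) :
    residueMatrix (a * a' + b * b' + (c * c' + d * c' - d * d'))
        (a * b' + b * a' + b * b' + (c * d' - d * c'))
        (c * a' + d * b' + a * c' + b * c' - b * d') (c * b' + d * a' + d * b' + a * d' - b * c') =
      residueMatrix a b c d * residueMatrix a' b' c' d' := by
  revert a b c d a' b' c' d'; decide

lemma residueMatrix_add (a b c d a' b' c' d' : ZMod 2) :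
    residueMatrix (a + a') (b + b') (c + c') (d + d') =
      residueMatrix a b c d + residueMatrix a' b' c' d' := by
  revert a b c d a' b' c' d'; decide

lemma residueMatrix_eq_zero_iff {a b c d : ZMod 2} :
    residueMatrix a b c d = 0 ↔ a = 0 ∧ b = 0 ∧ c = 0 ∧ d = 0 := by
  revert a b c d; decide

lemma residueMatrix_surjective (N : Matrix (Fin 2) (Fin 2) (ZMod 2)) :
    ∃ a b c d, residueMatrix a b c d = N := by
  revert N; decide

def reduceCoords : ℤ[i] × ℤ[i] × ℤ[i] × ℤ[i] → Matrix (Fin 2) (Fin 2) (ZMod 2)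
  | (p, q, r, s) => residueMatrix (toZModTwo p) (toZModTwo q) (toZModTwo r) (toZModTwo s)

lemma reduceCoords_goldenMul (v w : ℤ[i] × ℤ[i] × ℤ[i] × ℤ[i]) :
    reduceCoords (goldenMul v w) = reduceCoords v * reduceCoords w := by
  obtain ⟨p, q, r, s⟩ := v
  obtain ⟨p', q', r', s'⟩ := w
  simp only [reduceCoords, goldenMul, map_add, map_mul, map_sub, toZModTwo_sqrtd, one_mul]
  exact residueMatrix_mul ..

lemma reduceCoords_add (v w : ℤ[i] × ℤ[i] × ℤ[i] × ℤ[i]) :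
    reduceCoords (v + w) = reduceCoords v + reduceCoords w := by
  obtain ⟨p, q, r, s⟩ := v
  obtain ⟨p', q', r', s'⟩ := w
  simp only [reduceCoords, map_add]
  exact residueMatrix_add ..

lemma reduceCoords_eq_zero_iff {v : ℤ[i] × ℤ[i] × ℤ[i] × ℤ[i]} :
    reduceCoords v = 0 ↔ ∃ w, v = (1 + Zsqrtd.sqrtd : ℤ[i]) • w := by
  obtain ⟨p, q, r, s⟩ := v
  simp only [reduceCoords, residueMatrix_eq_zero_iff, toZModTwo_eq_zero_iff]
  constructor
  · rintro ⟨⟨p₀, rfl⟩, ⟨q₀, rfl⟩, ⟨r₀, rfl⟩, ⟨s₀, rfl⟩⟩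
    exact ⟨(p₀, q₀, r₀, s₀), rfl⟩
  · rintro ⟨⟨p₀, q₀, r₀, s₀⟩, hv⟩
    simp only [Prod.smul_mk, smul_eq_mul, Prod.mk.injEq] at hv
    obtain ⟨rfl, rfl, rfl, rfl⟩ := hv
    exact ⟨dvd_mul_right .., dvd_mul_right .., dvd_mul_right .., dvd_mul_right ..⟩

lemma reduceCoords_surjective : Function.Surjective reduceCoords := by
  intro N
  obtain ⟨a, b, c, d, rfl⟩ := residueMatrix_surjective N
  refine ⟨(a.val, b.val, c.val, d.val), ?_⟩
  simp only [reduceCoords, map_natCast, ZMod.natCast_zmod_val]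

noncomputable def goldenReduction (M : Matrix (Fin 2) (Fin 2) ℂ) :
    Matrix (Fin 2) (Fin 2) (ZMod 2) :=
  reduceCoords (Function.invFun goldenMatrix M)

lemma goldenReduction_goldenMatrix (v : ℤ[i] × ℤ[i] × ℤ[i] × ℤ[i]) :
    goldenReduction (goldenMatrix v) = reduceCoords v :=
  congrArg reduceCoords (Function.leftInverse_invFun goldenMatrix_injective v)

lemma goldenReduction_goldenMatrix_eq_zero_iff (v : ℤ[i] × ℤ[i] × ℤ[i] × ℤ[i]) :
    goldenReduction (goldenMatrix v) = 0 ↔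
      ∃ B ∈ goldenOrder, goldenMatrix v = (1 + Complex.I) • B := by
  have h1i : ((1 + Zsqrtd.sqrtd : ℤ[i]) : ℂ) = 1 + Complex.I := by
    rw [map_add, map_one, toComplex_sqrtd]
  simp only [goldenReduction_goldenMatrix, reduceCoords_eq_zero_iff, ← range_goldenMatrix,
    Set.exists_range_iff, ← h1i, ← goldenMatrix_smul, goldenMatrix_injective.eq_iff]

lemma exists_goldenMatrix_eq {S : Subring (Matrix (Fin 2) (Fin 2) ℂ)}
    (hS : (S : Set (Matrix (Fin 2) (Fin 2) ℂ)) = goldenOrder) (x : S) :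
    ∃ v, goldenMatrix v = x := by
  rw [← Set.mem_range, range_goldenMatrix, ← hS]
  exact x.2

noncomputable def goldenOrderReduction (S : Subring (Matrix (Fin 2) (Fin 2) ℂ))
    (hS : (S : Set (Matrix (Fin 2) (Fin 2) ℂ)) = goldenOrder) :
    S →+* Matrix (Fin 2) (Fin 2) (ZMod 2) where
  toFun x := goldenReduction x
  map_one' := by
    rw [OneMemClass.coe_one, ← goldenMatrix_one, goldenReduction_goldenMatrix]
    decide
  map_mul' x y := by
    obtain ⟨v, hv⟩ := exists_goldenMatrix_eq hS x
    obtain ⟨w, hw⟩ := exists_goldenMatrix_eq hS y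
    rw [Subring.coe_mul, ← hv, ← hw, goldenMatrix_mul, goldenReduction_goldenMatrix,
      goldenReduction_goldenMatrix, goldenReduction_goldenMatrix, reduceCoords_goldenMul]
  map_zero' := by
    rw [ZeroMemClass.coe_zero, ← goldenMatrix_zero, goldenReduction_goldenMatrix]
    decide
  map_add' x y := by
    obtain ⟨v, hv⟩ := exists_goldenMatrix_eq hS x
    obtain ⟨w, hw⟩ := exists_goldenMatrix_eq hS y
    rw [Subring.coe_add, ← hv, ← hw, ← goldenMatrix_add, goldenReduction_goldenMatrix,
      goldenReduction_goldenMatrix, goldenReduction_goldenMatrix, reduceCoords_add]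

lemma goldenOrderReduction_apply {S : Subring (Matrix (Fin 2) (Fin 2) ℂ)}
    (hS : (S : Set (Matrix (Fin 2) (Fin 2) ℂ)) = goldenOrder) (x : S) :
    goldenOrderReduction S hS x = goldenReduction x := rfl

lemma goldenOrderReduction_surjective {S : Subring (Matrix (Fin 2) (Fin 2) ℂ)}
    (hS : (S : Set (Matrix (Fin 2) (Fin 2) ℂ)) = goldenOrder) :
    Function.Surjective (goldenOrderReduction S hS) := by
  intro N
  obtain ⟨v, rfl⟩ := reduceCoords_surjective N
  have hv : goldenMatrix v ∈ S := by
    rw [← SetLike.mem_coe, hS, ← range_goldenMatrix]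
    exact Set.mem_range_self v
  exact ⟨⟨goldenMatrix v, hv⟩, goldenReduction_goldenMatrix v⟩

lemma goldenOrderReduction_eq_zero_iff {S : Subring (Matrix (Fin 2) (Fin 2) ℂ)}
    (hS : (S : Set (Matrix (Fin 2) (Fin 2) ℂ)) = goldenOrder) (x : S) :
    goldenOrderReduction S hS x = 0 ↔
      ∃ B ∈ goldenOrder, (x : Matrix (Fin 2) (Fin 2) ℂ) = (1 + Complex.I) • B := by
  obtain ⟨v, hv⟩ := exists_goldenMatrix_eq hS x
  rw [goldenOrderReduction_apply, ← hv]
  exact goldenReduction_goldenMatrix_eq_zero_iff v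

/-- Quotient of the Golden order by `(1+i)`: there is a surjective ring
homomorphism from the Golden order onto `M₂(𝔽₂)` whose kernel consists exactly of the
multiples `(1+i)·B`, `B ∈ Λ`.  Consequently `Λ/(1+i)Λ ≅ M₂(𝔽₂)`. -/
theorem stmt_5 (S : Subring (Matrix (Fin 2) (Fin 2) ℂ))
    (hS : (S : Set (Matrix (Fin 2) (Fin 2) ℂ)) = goldenOrder) :
    ∃ f : S →+* Matrix (Fin 2) (Fin 2) (ZMod 2),
      Function.Surjective f ∧
      ∀ x : S, f x = 0 ↔ ∃ B ∈ goldenOrder,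
        (x : Matrix (Fin 2) (Fin 2) ℂ) = (1 + Complex.I) • B :=
  ⟨goldenOrderReduction S hS, goldenOrderReduction_surjective hS,
    goldenOrderReduction_eq_zero_iff hS⟩
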